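/- arXiv:2109.08686 — 2 statements merged into one kernel-verified Lean document; each statement's English description precedes it below -/
import Mathlib

section
/- For 0 < ν < 1 and a real number y that is not an integer, the symmetric limit lim_{N→∞} ∑_{k=-N, k≠0}^{N} e^{2πikν}/(k+y) equals 2πi · e^{-2πiνy}/(1 - e^{-2πiy}) - 1/y. -/
/-!
Write `S_N(ν) = ∑_{|k| ≤ N} e^{2πikν} / (k + y)` and let `D_N(t) = ∑_{|k| ≤ N} e^{2πikt}` be the
Dirichlet kernel. Termwise differentiation shows that `e^{2πiyt} S_N(t)` is an antiderivative of
`2πi e^{2πiyt} D_N(t)`, and `S_N(1) = S_N(0)`. Hence `(e^{2πiy} - 1) S_N(0)` and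
`e^{2πiyν} S_N(ν) - S_N(0)` are `2πi` times the integrals of `e^{2πiyt} D_N(t)` over `[0, 1]` and
over `[0, ν]`.

Since `D_N(t) = sin((2N+1)πt) / sin(πt)`, the Riemann–Lebesgue lemma applied to
`(g(t) - g(0)) / sin(πt)` shows that for `0 < c < 1` and `g` Lipschitz at `0` the integral of
`g D_N` over `[0, c]` tends to `g(0) / 2`; by the symmetry `D_N(1 - t) = D_N(t)`, over `[0, 1]` it
tends to `(g(0) + g(1)) / 2`. This gives `S_N(0) → π cot(πy)`, then the limit of `S_N(ν)`, and
removing the term `k = 0` subtracts `1 / y`.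
-/

open Real Filter Complex MeasureTheory Topology FourierTransform Set

noncomputable def dirichletKernel (N : ℕ) (t : ℝ) : ℂ :=
  ∑ k ∈ Finset.Icc (-(N : ℤ)) N, cexp (2 * π * I * k * t)

lemma dirichletKernel_succ (N : ℕ) (t : ℝ) :
    dirichletKernel (N + 1) t = dirichletKernel N t + 2 * Complex.cos (2 * π * (N + 1) * t) := by
  have hIcc : Finset.Icc (-((N + 1 : ℕ) : ℤ)) (N + 1 : ℕ)
      = insert (-((N : ℤ) + 1)) (insert ((N : ℤ) + 1) (Finset.Icc (-(N : ℤ)) N)) := by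
    ext k; simp only [Finset.mem_Icc, Finset.mem_insert]; omega
  rw [dirichletKernel, dirichletKernel, hIcc,
    Finset.sum_insert (by simp only [Finset.mem_insert, Finset.mem_Icc]; omega),
    Finset.sum_insert (by simp), two_cos]
  push_cast
  ring_nf

lemma sin_mul_dirichletKernel (N : ℕ) (t : ℝ) :
    (Real.sin (π * t) : ℂ) * dirichletKernel N t = Real.sin ((2 * N + 1) * π * t) := by
  push_cast
  induction N with
  | zero => simp [dirichletKernel]
  | succ N ih =>
    have h := Complex.sin_sub_sin ((2 * (N + 1 : ℕ) + 1) * π * t) ((2 * N + 1) * π * t)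
    rw [dirichletKernel_succ, mul_add, ih]
    push_cast at h ⊢
    ring_nf at h ⊢
    linear_combination (-1 : ℂ) * h

lemma dirichletKernel_one_sub (N : ℕ) (t : ℝ) :
    dirichletKernel N (1 - t) = dirichletKernel N t := by
  refine Finset.sum_equiv (Equiv.neg ℤ)
    (fun k => by simp only [Finset.mem_Icc, Equiv.neg_apply]; omega) fun k _ => ?_
  rw [show 2 * π * I * k * ((1 - t : ℝ) : ℂ) = 2 * π * I * ((-k : ℤ) : ℂ) * t + k * (2 * π * I)
    by push_cast; ring, Complex.exp_add, Complex.exp_int_mul_two_pi_mul_I, mul_one,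
    Equiv.neg_apply]

@[fun_prop]
lemma continuous_dirichletKernel (N : ℕ) : Continuous (dirichletKernel N) := by
  unfold dirichletKernel
  fun_prop

lemma integral_dirichletKernel_zero_one (N : ℕ) :
    ∫ t in (0 : ℝ)..1, dirichletKernel N t = 1 := by
  have hterm (k : ℤ) :
      ∫ t in (0 : ℝ)..1, cexp (2 * π * I * k * t) = if k = 0 then 1 else 0 := by
    split_ifs with hk
    · simp [hk]
    · have hc : 2 * π * I * k ≠ 0 := by simp [hk, pi_ne_zero]
      rw [integral_exp_mul_complex hc, ofReal_one, mul_one, mul_comm,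
        Complex.exp_int_mul_two_pi_mul_I]
      simp
  simp_rw [dirichletKernel]
  rw [intervalIntegral.integral_finsetSum fun k _ =>
    (by fun_prop : Continuous _).intervalIntegrable _ _]
  simp [hterm]

lemma integral_dirichletKernel_zero_half (N : ℕ) :
    ∫ t in (0 : ℝ)..1 / 2, dirichletKernel N t = 1 / 2 := by
  have hhalf : ∫ t in (1 / 2 : ℝ)..1, dirichletKernel N t =
      ∫ t in (0 : ℝ)..1 / 2, dirichletKernel N t := by
    have h := intervalIntegral.integral_comp_sub_left (dirichletKernel N) (a := 0) (b := 1 / 2) 1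
    norm_num [dirichletKernel_one_sub] at h
    norm_num [h]
  have := integral_dirichletKernel_zero_one N
  rw [← intervalIntegral.integral_add_adjacent_intervals (b := 1 / 2)
    ((continuous_dirichletKernel N).intervalIntegrable _ _)
    ((continuous_dirichletKernel N).intervalIntegrable _ _), hhalf] at this
  linear_combination this / 2

lemma tendsto_integral_mul_sin_cocompact {f : ℝ → ℂ} (hf : Integrable f) :
    Tendsto (fun w : ℝ => ∫ v, f v * Real.sin (w * v)) (cocompact ℝ) (𝓝 0) := by
  have hRL (c : ℝ) (hc : c ≠ 0) :
      Tendsto (fun w : ℝ => ∫ v, 𝐞 (-(v * (c * w))) • f v) (cocompact ℝ) (𝓝 0) :=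
    (Real.tendsto_integral_exp_smul_cocompact f).comp
      (Homeomorph.mulLeft₀ c hc).isClosedEmbedding.tendsto_cocompact
  have hint (a : ℝ) : Integrable (fun v => 𝐞 (-(v * a)) • f v) :=
    (Real.fourierIntegral_convergent_iff' (ContinuousLinearMap.mul ℝ ℝ) a).2 hf
  have hc : (2 * π)⁻¹ ≠ 0 := by positivity
  have hsin (w : ℝ) : ∫ v, f v * Real.sin (w * v) =
      ((∫ v, 𝐞 (-(v * ((2 * π)⁻¹ * w))) • f v) - ∫ v, 𝐞 (-(v * (-(2 * π)⁻¹ * w))) • f v)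
        * (I / 2) := by
    rw [← integral_sub (hint _) (hint _), ← integral_mul_const]
    congr 1 with v
    simp only [Real.fourierChar_apply, Circle.smul_def, smul_eq_mul, Complex.ofReal_sin,
      Complex.sin]
    push_cast
    field_simp
  refine Tendsto.congr (fun w => (hsin w).symm) ?_
  simpa only [sub_self, zero_mul] using
    ((hRL _ hc).sub (hRL _ (neg_ne_zero.2 hc))).mul_const (I / 2)

lemma tendsto_integral_mul_dirichletKernel_of_integrable {φ : ℝ → ℂ}
    (hsupp : ∀ t ∉ Ioo 0 1, φ t = 0) (hφ : Integrable fun t => φ t / Real.sin (π * t)) :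
    Tendsto (fun N : ℕ => ∫ t, φ t * dirichletKernel N t) atTop (𝓝 0) := by
  have hfreq : Tendsto (fun N : ℕ => (2 * N + 1) * π) atTop (cocompact ℝ) :=
    atTop_le_cocompact.trans' <| Tendsto.atTop_mul_const pi_pos <|
      tendsto_atTop_add_const_right _ _ <| tendsto_natCast_atTop_atTop.const_mul_atTop two_pos
  refine ((tendsto_integral_mul_sin_cocompact hφ).comp hfreq).congr fun N => ?_
  refine integral_congr_ae (ae_of_all _ fun t => ?_)
  by_cases ht : t ∈ Ioo 0 1
  · have hsin : (Real.sin (π * t) : ℂ) ≠ 0 := ofReal_ne_zero.2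
      (sin_pos_of_pos_of_lt_pi (by nlinarith [pi_pos, ht.1]) (by nlinarith [pi_pos, ht.2])).ne'
    dsimp only
    rw [← sin_mul_dirichletKernel]
    field_simp
  · simp [hsupp t ht]

lemma integrable_div_sin_pi_mul {φ : ℝ → ℂ} {M K : ℝ} (hφ : AEStronglyMeasurable φ)
    (hM : M < 1) (hsupp : ∀ t ∉ Ioc 0 M, φ t = 0) (hK : ∀ t ∈ Ioc 0 M, ‖φ t‖ ≤ K * t) :
    Integrable fun t => φ t / Real.sin (π * t) := by
  refine Integrable.mono' (g := (Ioc 0 M).indicator fun _ => K * M / Real.sin (π * M))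
    ((integrable_indicator_iff measurableSet_Ioc).2 (integrableOn_const measure_Ioc_lt_top.ne))
    (hφ.div₀ (by fun_prop : Continuous fun t : ℝ => (Real.sin (π * t) : ℂ)).aestronglyMeasurable)
    (ae_of_all _ fun t => ?_)
  by_cases ht : t ∈ Ioc 0 M
  · have hM0 : 0 < M := ht.1.trans_le ht.2
    have hsinM : 0 < Real.sin (π * M) :=
      sin_pos_of_pos_of_lt_pi (by positivity) (by nlinarith [pi_pos])
    have hsin : t / M * Real.sin (π * M) ≤ Real.sin (π * t) := by
      have := strictConcaveOn_sin_Icc.concaveOn.2 (show π * M ∈ Icc 0 π from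
        ⟨by positivity, by nlinarith [pi_pos]⟩) ⟨le_rfl, pi_pos.le⟩
        (show 0 ≤ t / M by have := ht.1; positivity) (sub_nonneg.2 ((div_le_one hM0).2 ht.2))
        (add_sub_cancel _ _)
      simp only [smul_eq_mul, mul_zero, add_zero, Real.sin_zero] at this
      rwa [show t / M * (π * M) = π * t by field_simp] at this
    have hpos : 0 < t / M * Real.sin (π * M) := by have := ht.1; positivity
    rw [indicator_of_mem ht, norm_div, norm_real, Real.norm_of_nonneg (hpos.le.trans hsin)]
    calc ‖φ t‖ / Real.sin (π * t) ≤ K * t / (t / M * Real.sin (π * M)) :=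
          div_le_div₀ ((norm_nonneg _).trans (hK t ht)) (hK t ht) hpos hsin
      _ = K * M / Real.sin (π * M) := by field_simp [ht.1.ne']
  · simp [hsupp t ht, indicator_of_notMem ht]

/-- Subtracting `g 0` on `(0, 1/2]`, where the kernel has integral `1/2`, makes the function
vanish to first order at `0`, so that it stays integrable after division by `sin (π t)`. -/
noncomputable def dirichletRemainder (g : ℝ → ℂ) (c : ℝ) : ℝ → ℂ :=
  (Ioc 0 c).indicator g - (Ioc 0 (1 / 2)).indicator fun _ => g 0

section DirichletRemainder

variable {g : ℝ → ℂ} {c : ℝ}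

lemma integral_dirichletRemainder_mul_dirichletKernel (hc0 : 0 < c)
    (hg : IntervalIntegrable g volume 0 c) (N : ℕ) :
    ∫ t, dirichletRemainder g c t * dirichletKernel N t =
      (∫ t in (0 : ℝ)..c, g t * dirichletKernel N t) - g 0 / 2 := by
  have hgD : IntegrableOn (fun t => g t * dirichletKernel N t) (Ioc 0 c) :=
    (hg.mul_continuousOn (continuous_dirichletKernel N).continuousOn).1
  have hD : IntegrableOn (fun t => g 0 * dirichletKernel N t) (Ioc 0 (1 / 2)) :=
    (continuous_const.mul (continuous_dirichletKernel N)).integrableOn_Ioc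
  have hsplit : (fun t => dirichletRemainder g c t * dirichletKernel N t) = fun t =>
      (Ioc 0 c).indicator (fun t => g t * dirichletKernel N t) t
        - (Ioc 0 (1 / 2)).indicator (fun t => g 0 * dirichletKernel N t) t := by
    ext t
    simp only [dirichletRemainder, Pi.sub_apply, sub_mul, indicator_mul_left]
  rw [hsplit, integral_sub (hgD.integrable_indicator measurableSet_Ioc)
    (hD.integrable_indicator measurableSet_Ioc), integral_indicator measurableSet_Ioc,
    integral_indicator measurableSet_Ioc, ← intervalIntegral.integral_of_le hc0.le,
    ← intervalIntegral.integral_of_le (by norm_num), intervalIntegral.integral_const_mul,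
    integral_dirichletKernel_zero_half]
  ring

lemma dirichletRemainder_eq_zero {t : ℝ} (ht : t ∉ Ioc 0 (max c (1 / 2))) :
    dirichletRemainder g c t = 0 := by
  have h1 : t ∉ Ioc 0 c := fun h => ht ⟨h.1, h.2.trans (le_max_left _ _)⟩
  have h2 : t ∉ Ioc 0 (1 / 2) := fun h => ht ⟨h.1, h.2.trans (le_max_right _ _)⟩
  rw [dirichletRemainder, Pi.sub_apply, indicator_of_notMem h1, indicator_of_notMem h2,
    sub_zero]

lemma norm_dirichletRemainder_le {L : ℝ} (hc0 : 0 < c)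
    (hL : ∀ t ∈ Ioc 0 c, ‖g t - g 0‖ ≤ L * t) {t : ℝ} (ht : t ∈ Ioc 0 (max c (1 / 2))) :
    ‖dirichletRemainder g c t‖ ≤ (L + (2 + c⁻¹) * ‖g 0‖) * t := by
  obtain ⟨ht0, htM⟩ := ht
  have hL0 : 0 ≤ L :=
    nonneg_of_mul_nonneg_left ((norm_nonneg _).trans (hL c ⟨hc0, le_rfl⟩)) hc0
  have hLt : 0 ≤ L * t := by positivity
  have hgt0 : 0 ≤ ‖g 0‖ * t := by positivity
  have hct : 0 ≤ c⁻¹ * ‖g 0‖ * t := by positivity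
  simp only [dirichletRemainder, Pi.sub_apply, indicator_apply, mem_Ioc, ht0, true_and]
  split_ifs with htc hth hth
  · nlinarith [hL t ⟨ht0, htc⟩]
  · have hgt := norm_le_norm_add_norm_sub' (g t) (g 0)
    rw [sub_zero]
    nlinarith [hL t ⟨ht0, htc⟩,
      mul_nonneg (norm_nonneg (g 0)) (sub_nonneg.2 (not_le.1 hth).le)]
  · have : ‖g 0‖ ≤ c⁻¹ * ‖g 0‖ * t := by
      rw [mul_comm c⁻¹, mul_assoc]
      exact le_mul_of_one_le_right (norm_nonneg _) ((one_le_inv_mul₀ hc0).2 (not_le.1 htc).le)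
    rw [zero_sub, norm_neg]
    nlinarith
  · exact absurd htM (not_le.2 (max_lt (not_le.1 htc) (not_le.1 hth)))

end DirichletRemainder

theorem tendsto_integral_mul_dirichletKernel {g : ℝ → ℂ} {c L : ℝ} (hc0 : 0 < c)
    (hc1 : c < 1) (hg : IntervalIntegrable g volume 0 c)
    (hL : ∀ t ∈ Ioc 0 c, ‖g t - g 0‖ ≤ L * t) :
    Tendsto (fun N : ℕ => ∫ t in (0 : ℝ)..c, g t * dirichletKernel N t) atTop
      (𝓝 (g 0 / 2)) := by
  have hM : max c (1 / 2) < 1 := max_lt hc1 (by norm_num)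
  have hmeas : AEStronglyMeasurable (dirichletRemainder g c) :=
    ((hg.1.integrable_indicator measurableSet_Ioc).sub ((integrableOn_const
      measure_Ioc_lt_top.ne).integrable_indicator measurableSet_Ioc)).aestronglyMeasurable
  have h := tendsto_integral_mul_dirichletKernel_of_integrable
    (fun t ht => dirichletRemainder_eq_zero fun h => ht ⟨h.1, h.2.trans_lt hM⟩)
    (integrable_div_sin_pi_mul hmeas hM (fun t => dirichletRemainder_eq_zero)
      fun t => norm_dirichletRemainder_le hc0 hL)
  simp_rw [integral_dirichletRemainder_mul_dirichletKernel hc0 hg] at h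
  exact tendsto_sub_nhds_zero_iff.1 h

theorem tendsto_integral_mul_dirichletKernel_zero_one {g : ℝ → ℂ} {L : ℝ}
    (hg : IntervalIntegrable g volume 0 1) (hL₀ : ∀ t ∈ Icc 0 1, ‖g t - g 0‖ ≤ L * t)
    (hL₁ : ∀ t ∈ Icc 0 1, ‖g t - g 1‖ ≤ L * (1 - t)) :
    Tendsto (fun N : ℕ => ∫ t in (0 : ℝ)..1, g t * dirichletKernel N t) atTop
      (𝓝 ((g 0 + g 1) / 2)) := by
  have hsub : uIcc (0 : ℝ) (1 / 2) ⊆ uIcc 0 1 :=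
    uIcc_subset_uIcc_left (by norm_num [uIcc_of_le])
  have hleft := tendsto_integral_mul_dirichletKernel (c := 1 / 2) (by norm_num) (by norm_num)
    (hg.mono_set hsub) fun t ht => hL₀ t ⟨ht.1.le, ht.2.trans (by norm_num)⟩
  have hright := tendsto_integral_mul_dirichletKernel (g := fun t => g (1 - t)) (c := 1 / 2)
    (by norm_num) (by norm_num) ((by simpa using (hg.comp_sub_left 1).symm :
      IntervalIntegrable (fun t => g (1 - t)) volume 0 1).mono_set hsub)
    fun t ht => by simpa using hL₁ (1 - t) ⟨by linarith [ht.2], by linarith [ht.1]⟩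
  rw [add_div]
  refine (hleft.add (by simpa only [sub_zero] using hright)).congr fun N => ?_
  have hgD := hg.mul_continuousOn (continuous_dirichletKernel N).continuousOn
  rw [← intervalIntegral.integral_add_adjacent_intervals (hgD.mono_set hsub)
    (hgD.mono_set (uIcc_subset_uIcc_right (by norm_num [uIcc_of_le])))]
  congr 1
  have h := intervalIntegral.integral_comp_sub_left (fun t => g t * dirichletKernel N t)
    (a := 0) (b := 1 / 2) 1
  norm_num [dirichletKernel_one_sub] at h
  exact h

lemma norm_exp_two_pi_I_mul_sub_le (y s t : ℝ) :
    ‖cexp (2 * π * I * y * t) - cexp (2 * π * I * y * s)‖ ≤ 2 * π * |y| * |t - s| := by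
  have h : cexp (2 * π * I * y * t) - cexp (2 * π * I * y * s) =
      cexp ((2 * π * y * s : ℝ) * I) * (cexp (I * (2 * π * y * (t - s) : ℝ)) - 1) := by
    rw [mul_sub, mul_one, ← Complex.exp_add]
    push_cast
    ring_nf
  rw [h, norm_mul, norm_exp_ofReal_mul_I, one_mul]
  refine norm_exp_I_mul_ofReal_sub_one_le.trans_eq ?_
  rw [Real.norm_eq_abs, abs_mul, abs_mul, abs_mul, abs_of_pos two_pos, abs_of_pos pi_pos]

noncomputable def kroneckerSum (y : ℝ) (N : ℕ) (ν : ℝ) : ℂ :=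
  ∑ k ∈ Finset.Icc (-(N : ℤ)) N, cexp (2 * π * I * k * ν) / (k + y)

lemma kroneckerSum_one (y : ℝ) (N : ℕ) : kroneckerSum y N 1 = kroneckerSum y N 0 := by
  refine Finset.sum_congr rfl fun k _ => ?_
  rw [ofReal_one, mul_one, mul_comm, Complex.exp_int_mul_two_pi_mul_I, ofReal_zero, mul_zero,
    Complex.exp_zero]

section Kronecker

variable {y : ℝ}

lemma hasDerivAt_exp_mul_kroneckerSum (hy : ∀ k : ℤ, (k : ℂ) + y ≠ 0) (N : ℕ) (t : ℝ) :
    HasDerivAt (fun t : ℝ => cexp (2 * π * I * y * t) * kroneckerSum y N t)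
      (2 * π * I * (cexp (2 * π * I * y * t) * dirichletKernel N t)) t := by
  have hfun : (fun t : ℝ => cexp (2 * π * I * y * t) * kroneckerSum y N t) =
      fun t : ℝ => ∑ k ∈ Finset.Icc (-(N : ℤ)) N, cexp (2 * π * I * (k + y) * t) / (k + y) := by
    ext t
    rw [kroneckerSum, Finset.mul_sum]
    refine Finset.sum_congr rfl fun k _ => ?_
    rw [mul_div_assoc', ← Complex.exp_add]
    ring_nf
  rw [hfun, dirichletKernel, Finset.mul_sum, Finset.mul_sum]
  refine HasDerivAt.fun_sum fun k _ => ?_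
  refine (((hasDerivAt_id (t : ℂ)).const_mul (2 * π * I * (k + y))).cexp.comp_ofReal.div_const
    (k + y)).congr_deriv ?_
  rw [id, mul_one, mul_div_assoc, mul_div_cancel_right₀ _ (hy k), ← Complex.exp_add]
  ring_nf

lemma integral_exp_mul_dirichletKernel (hy : ∀ k : ℤ, (k : ℂ) + y ≠ 0) (N : ℕ) (ν : ℝ) :
    2 * π * I * ∫ t in (0 : ℝ)..ν, cexp (2 * π * I * y * t) * dirichletKernel N t =
      cexp (2 * π * I * y * ν) * kroneckerSum y N ν - kroneckerSum y N 0 := by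
  rw [← intervalIntegral.integral_const_mul, intervalIntegral.integral_eq_sub_of_hasDerivAt
    (fun t _ => hasDerivAt_exp_mul_kroneckerSum hy N t)
    ((by fun_prop : Continuous _).intervalIntegrable _ _)]
  simp

lemma intCast_add_ne_zero (hy : ∀ n : ℤ, y ≠ n) (k : ℤ) : (k : ℂ) + y ≠ 0 := by
  rw [← ofReal_intCast, ← ofReal_add, ofReal_ne_zero]
  exact fun h => hy (-k) (by push_cast; linarith)

lemma exp_two_pi_I_mul_ne_one (hy : ∀ n : ℤ, y ≠ n) : cexp (2 * π * I * y) ≠ 1 := by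
  rw [Ne, Complex.exp_eq_one_iff]
  rintro ⟨n, hn⟩
  have h2πI : 2 * π * I ≠ 0 := by simp [pi_ne_zero]
  exact hy n (by exact_mod_cast mul_left_cancel₀ h2πI (hn.trans (mul_comm _ _)))

lemma tendsto_integral_exp_mul_dirichletKernel {c : ℝ} (hc0 : 0 < c) (hc1 : c < 1) :
    Tendsto (fun N : ℕ => ∫ t in (0 : ℝ)..c, cexp (2 * π * I * y * t) * dirichletKernel N t)
      atTop (𝓝 (1 / 2)) := by
  simpa using tendsto_integral_mul_dirichletKernel (L := 2 * π * |y|) hc0 hc1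
    ((by fun_prop : Continuous fun t : ℝ => cexp (2 * π * I * y * t)).intervalIntegrable 0 c)
    fun t ht => by simpa [abs_of_pos ht.1] using norm_exp_two_pi_I_mul_sub_le y 0 t

lemma tendsto_integral_exp_mul_dirichletKernel_zero_one :
    Tendsto (fun N : ℕ => ∫ t in (0 : ℝ)..1, cexp (2 * π * I * y * t) * dirichletKernel N t)
      atTop (𝓝 ((1 + cexp (2 * π * I * y)) / 2)) := by
  simpa using tendsto_integral_mul_dirichletKernel_zero_one (L := 2 * π * |y|)
    ((by fun_prop : Continuous fun t : ℝ => cexp (2 * π * I * y * t)).intervalIntegrable 0 1)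
    (fun t ht => by simpa [abs_of_nonneg ht.1] using norm_exp_two_pi_I_mul_sub_le y 0 t)
    fun t ht => by
      simpa [abs_of_nonpos (sub_nonpos.2 ht.2)] using norm_exp_two_pi_I_mul_sub_le y 1 t

/-- The limit is `π cot (π y)`. -/
theorem tendsto_kroneckerSum_zero (hy : ∀ n : ℤ, y ≠ n) :
    Tendsto (fun N : ℕ => kroneckerSum y N 0) atTop
      (𝓝 (π * I * (cexp (2 * π * I * y) + 1) / (cexp (2 * π * I * y) - 1))) := by
  have hE1 := sub_ne_zero.2 (exp_two_pi_I_mul_ne_one hy)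
  have hS (N : ℕ) : kroneckerSum y N 0 = 2 * π * I *
      (∫ t in (0 : ℝ)..1, cexp (2 * π * I * y * t) * dirichletKernel N t) /
        (cexp (2 * π * I * y) - 1) := by
    rw [eq_div_iff hE1, integral_exp_mul_dirichletKernel (intCast_add_ne_zero hy),
      kroneckerSum_one, ofReal_one, mul_one]
    ring
  convert ((tendsto_integral_exp_mul_dirichletKernel_zero_one.const_mul (2 * π * I)).div_const
    (cexp (2 * π * I * y) - 1)).congr fun N => (hS N).symm using 2
  ring

theorem tendsto_kroneckerSum {ν : ℝ} (h0 : 0 < ν) (h1 : ν < 1) (hy : ∀ n : ℤ, y ≠ n) :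
    Tendsto (fun N : ℕ => kroneckerSum y N ν) atTop
      (𝓝 (2 * π * I * cexp (-(2 * π * I * ν * y)) / (1 - cexp (-(2 * π * I * y))))) := by
  have hS (N : ℕ) : kroneckerSum y N ν = (2 * π * I *
      (∫ t in (0 : ℝ)..ν, cexp (2 * π * I * y * t) * dirichletKernel N t) +
        kroneckerSum y N 0) / cexp (2 * π * I * y * ν) := by
    rw [eq_div_iff (Complex.exp_ne_zero _),
      integral_exp_mul_dirichletKernel (intCast_add_ne_zero hy)]
    ring
  have hlim := (((tendsto_integral_exp_mul_dirichletKernel (y := y) h0 h1).const_mul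
    (2 * π * I)).add (tendsto_kroneckerSum_zero hy)).div_const (cexp (2 * π * I * y * ν))
  convert hlim.congr fun N => (hS N).symm using 2
  have hE0 : cexp (2 * π * I * y) ≠ 0 := Complex.exp_ne_zero _
  have hE1 := sub_ne_zero.2 (exp_two_pi_I_mul_ne_one hy)
  rw [Complex.exp_neg, Complex.exp_neg, mul_right_comm _ (ν : ℂ)]
  field_simp
  ring

end Kronecker

theorem stmt_5 (ν y : ℝ) (h0 : 0 < ν) (h1 : ν < 1) (hy : ∀ n : ℤ, y ≠ (n : ℝ)) :
    Tendsto (fun N : ℕ => ∑ k ∈ Finset.Icc (-(N : ℤ)) (N : ℤ) \ {0},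
        Complex.exp (2 * π * Complex.I * (k : ℂ) * (ν : ℂ)) / ((k : ℂ) + (y : ℂ)))
      atTop
      (nhds (2 * π * Complex.I * Complex.exp (-(2 * π * Complex.I * (ν : ℂ) * (y : ℂ)))
          / (1 - Complex.exp (-(2 * π * Complex.I * (y : ℂ)))) - 1 / (y : ℂ))) := by
  have hsum (N : ℕ) : ∑ k ∈ Finset.Icc (-(N : ℤ)) N \ {0}, cexp (2 * π * I * k * ν) / (k + y) =
      kroneckerSum y N ν - 1 / y := by
    have h0mem : (0 : ℤ) ∈ Finset.Icc (-(N : ℤ)) N := by simp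
    rw [kroneckerSum, Finset.sum_eq_sum_sdiff_singleton_add h0mem]
    simp
  exact ((tendsto_kroneckerSum h0 h1 hy).sub_const (1 / y)).congr fun N => (hsum N).symm
end

section
/- The series ∑_{k=2}^∞ log(4(k²-1)/(4k²-1)) converges and equals log(3π/16). -/
/-!
With `m = k + 2`, the factor `4(m² - 1)/(4m² - 1)` is the Wallis factor `(2m)²/((2m - 1)(2m + 1))`
times `(m² - 1)/m²`. The latter telescopes, so the partial products are `3/4 · W_{n+1} · (n+2)/(2(n+1))`
and tend to `3/4 · π/2 · 1/2 = 3π/16`. All factors lie in `(0, 1]`, so the logarithms have one sign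
and convergence of the partial sums already gives an unconditional sum.
-/

open Real Filter Finset Topology

theorem Real.hasSum_log_of_tendsto_prod {f : ℕ → ℝ} (hpos : ∀ k, 0 < f k) (hle : ∀ k, f k ≤ 1)
    {p : ℝ} (hp : 0 < p) (h : Tendsto (fun n ↦ ∏ k ∈ range n, f k) atTop (𝓝 p)) :
    HasSum (fun k ↦ log (f k)) (log p) := by
  have hsum : ∀ n, ∑ k ∈ range n, -log (f k) = -log (∏ k ∈ range n, f k) := fun n ↦ by
    rw [sum_neg_distrib, log_prod fun k _ ↦ (hpos k).ne']
  have hneg : HasSum (fun k ↦ -log (f k)) (-log p) := by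
    rw [hasSum_iff_tendsto_nat_of_nonneg (fun k ↦ neg_nonneg.2 (log_nonpos (hpos k).le (hle k))),
      funext hsum]
    exact ((continuousAt_log hp.ne').tendsto.comp h).neg
  simpa using hneg.neg

noncomputable def shiftedWallisFactor (k : ℕ) : ℝ :=
  4 * (((k : ℝ) + 2) ^ 2 - 1) / (4 * ((k : ℝ) + 2) ^ 2 - 1)

lemma shiftedWallisFactor_pos (k : ℕ) : 0 < shiftedWallisFactor k := by
  unfold shiftedWallisFactor
  have hk : (0 : ℝ) ≤ k := k.cast_nonneg
  apply div_pos <;> nlinarith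

lemma shiftedWallisFactor_le_one (k : ℕ) : shiftedWallisFactor k ≤ 1 := by
  unfold shiftedWallisFactor
  have hk : (0 : ℝ) ≤ k := k.cast_nonneg
  rw [div_le_one (by nlinarith)]
  linarith

lemma prod_shiftedWallisFactor (n : ℕ) :
    ∏ k ∈ range n, shiftedWallisFactor k = 3 / 8 * Wallis.W (n + 1) * (1 + 1 / ((n : ℝ) + 1)) := by
  induction n with
  | zero => norm_num [Wallis.W]
  | succ n ih =>
    rw [prod_range_succ, ih, Wallis.W_succ (n + 1), shiftedWallisFactor]
    have hn : (0 : ℝ) ≤ n := n.cast_nonneg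
    have h1 : (0 : ℝ) < 4 * ((n : ℝ) + 2) ^ 2 - 1 := by nlinarith
    push_cast
    field_simp
    ring

lemma tendsto_prod_shiftedWallisFactor :
    Tendsto (fun n ↦ ∏ k ∈ range n, shiftedWallisFactor k) atTop (𝓝 (3 * π / 16)) := by
  simp_rw [prod_shiftedWallisFactor]
  have hW : Tendsto (fun n : ℕ ↦ Wallis.W (n + 1)) atTop (𝓝 (π / 2)) :=
    Wallis.tendsto_W_nhds_pi_div_two.comp (tendsto_add_atTop_nat 1)
  have h := (hW.const_mul (3 / 8)).mul (tendsto_one_div_add_atTop_nhds_zero_nat.const_add 1)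
  convert h using 2
  ring

theorem stmt_11 :
    HasSum (fun k : ℕ => Real.log (4 * (((k : ℝ) + 2) ^ 2 - 1) / (4 * ((k : ℝ) + 2) ^ 2 - 1)))
      (Real.log (3 * π / 16)) :=
  hasSum_log_of_tendsto_prod shiftedWallisFactor_pos shiftedWallisFactor_le_one (by positivity)
    tendsto_prod_shiftedWallisFactor
end
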